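/- For |q|<1, Gauss' identity holds: (-q;q)_∞^2 (q;q)_∞ = (q^2;q^2)_∞/(q;q^2)_∞ = ∑_{n≥0} q^{n(n+1)/2}. -/

import Mathlib

open scoped BigOperators

noncomputable def qPoch (a q : ℂ) (n : ℕ) : ℂ := ∏ j ∈ Finset.range n, (1 - a * q ^ j)

noncomputable def qPochInf (a q : ℂ) : ℂ := ∏' j : ℕ, (1 - a * q ^ j)

/-!
The finite form of the Jacobi triple product at `z = 1`,
`∏_{j<N} (1 + q^j) (1 + q^{j+1}) = ∑_{|k| ≤ N} [2N, N+k]_q q^{k(k+1)/2}`,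
follows by induction from the two Pascal recurrences of the Gaussian binomials. As `N → ∞`,
`[2N, N+k]_q → 1/(q;q)_∞` with a bound uniform in `N` and `k`, so Tannery's theorem gives
`2 (-q;q)_∞² (q;q)_∞ = ∑_{k ∈ ℤ} q^{k(k+1)/2} = 2 ∑_{n ≥ 0} q^{n(n+1)/2}`.
The quotient form comes from `(q;q)_∞ (-q;q)_∞ = (q²;q²)_∞` together with
`(q;q)_∞ = (q;q²)_∞ (q²;q²)_∞`, which give Euler's `(-q;q)_∞ (q;q²)_∞ = 1`.
-/

open Filter Topology

lemma qPoch_zero (a q : ℂ) : qPoch a q 0 = 1 :=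
  Finset.prod_range_zero _

lemma qPoch_succ (a q : ℂ) (n : ℕ) : qPoch a q (n + 1) = qPoch a q n * (1 - a * q ^ n) :=
  Finset.prod_range_succ _ _

lemma qPochInf_zero_right (a : ℂ) : qPochInf a 0 = 1 - a := by
  rw [qPochInf, tprod_eq_mulSingle 0 fun j hj => by simp [hj]]
  simp

section QPochhammer

variable {a q : ℂ}

lemma norm_sq_lt_one (hq : ‖q‖ < 1) : ‖q ^ 2‖ < 1 := by
  rw [norm_pow]
  exact pow_lt_one₀ (norm_nonneg q) hq two_ne_zero

lemma one_sub_mul_pow_ne_zero (ha : ‖a‖ < 1) (hq : ‖q‖ ≤ 1) (j : ℕ) : 1 - a * q ^ j ≠ 0 := by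
  refine sub_ne_zero.mpr fun h => ?_
  have : ‖a * q ^ j‖ < 1 := by
    rw [norm_mul, norm_pow]
    exact (mul_le_of_le_one_right (norm_nonneg a) (pow_le_one₀ (norm_nonneg q) hq)).trans_lt ha
  simp [← h] at this

lemma qPoch_ne_zero (ha : ‖a‖ < 1) (hq : ‖q‖ ≤ 1) (n : ℕ) : qPoch a q n ≠ 0 :=
  Finset.prod_ne_zero_iff.mpr fun j _ => one_sub_mul_pow_ne_zero ha hq j

lemma summable_norm_mul_pow (a : ℂ) (hq : ‖q‖ < 1) : Summable fun j : ℕ => ‖-(a * q ^ j)‖ := by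
  simpa [norm_mul, norm_pow] using (summable_geometric_of_lt_one (norm_nonneg q) hq).mul_left ‖a‖

lemma hasProd_qPochInf (a : ℂ) (hq : ‖q‖ < 1) :
    HasProd (fun j => 1 - a * q ^ j) (qPochInf a q) := by
  have h : Multipliable fun j => 1 - a * q ^ j := by
    simpa only [sub_eq_add_neg] using multipliable_one_add_of_summable (summable_norm_mul_pow a hq)
  exact h.hasProd

lemma tendsto_qPoch (a : ℂ) (hq : ‖q‖ < 1) : Tendsto (qPoch a q) atTop (𝓝 (qPochInf a q)) :=
  (hasProd_qPochInf a hq).tendsto_prod_nat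

lemma qPochInf_ne_zero (ha : ‖a‖ < 1) (hq : ‖q‖ < 1) : qPochInf a q ≠ 0 := by
  simpa only [qPochInf, sub_eq_add_neg] using tprod_one_add_ne_zero_of_summable
    (fun j => by simpa only [← sub_eq_add_neg] using one_sub_mul_pow_ne_zero ha hq.le j)
    (summable_norm_mul_pow a hq)

lemma qPochInf_eq_one_sub_mul (a : ℂ) (hq : ‖q‖ < 1) :
    qPochInf a q = (1 - a) * qPochInf (a * q) q := by
  have h : HasProd (fun j => 1 - a * q ^ (j + 1)) (qPochInf (a * q) q) := by
    convert hasProd_qPochInf (a * q) hq using 3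
    ring
  rw [qPochInf, (HasProd.zero_mul (f := fun j => 1 - a * q ^ j) h).tprod_eq, pow_zero, mul_one]

lemma qPochInf_mul_qPochInf_neg (a : ℂ) (hq : ‖q‖ < 1) :
    qPochInf a q * qPochInf (-a) q = qPochInf (a ^ 2) (q ^ 2) := by
  refine ((hasProd_qPochInf a hq).mul (hasProd_qPochInf (-a) hq)).tprod_eq.symm.trans
    (tprod_congr fun j => ?_)
  ring

lemma qPochInf_eq_even_mul_odd (a : ℂ) (hq : ‖q‖ < 1) :
    qPochInf a q = qPochInf a (q ^ 2) * qPochInf (a * q) (q ^ 2) := by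
  have hq2 := norm_sq_lt_one hq
  refine (HasProd.even_mul_odd (f := fun j => 1 - a * q ^ j) ?_ ?_).tprod_eq
  · simpa only [pow_mul] using hasProd_qPochInf a hq2
  · simpa only [pow_succ, pow_mul, mul_assoc, mul_comm q] using hasProd_qPochInf (a * q) hq2

lemma qPochInf_neg_mul_qPochInf_sq_eq_one (hq : ‖q‖ < 1) :
    qPochInf (-q) q * qPochInf q (q ^ 2) = 1 := by
  have hq2 := norm_sq_lt_one hq
  have h := qPochInf_mul_qPochInf_neg q hq
  rw [qPochInf_eq_even_mul_odd q hq, ← sq] at h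
  refine mul_right_cancel₀ (qPochInf_ne_zero hq2 hq2) ?_
  linear_combination h

end QPochhammer

section GaussBinom

variable {q : ℂ}

/-- The Gaussian binomial `[m, r]_q`, extended by zero outside `0 ≤ r ≤ m` so that sums over `r`
may run over all of `ℤ`. -/
noncomputable def gaussBinom (q : ℂ) (m : ℕ) (r : ℤ) : ℂ :=
  if 0 ≤ r ∧ r ≤ m then qPoch q q m / (qPoch q q r.toNat * qPoch q q (m - r.toNat)) else 0

lemma gaussBinom_of_neg {m : ℕ} {r : ℤ} (h : r < 0) : gaussBinom q m r = 0 :=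
  if_neg (by omega)

lemma gaussBinom_of_lt {m : ℕ} {r : ℤ} (h : m < r) : gaussBinom q m r = 0 :=
  if_neg (by omega)

lemma gaussBinom_add_eq_div (s j : ℕ) :
    gaussBinom q (s + j) s = qPoch q q (s + j) / (qPoch q q s * qPoch q q j) := by
  rw [gaussBinom, if_pos (by omega), Int.toNat_natCast, Nat.add_sub_cancel_left]

lemma gaussBinom_zero_right (hq : ‖q‖ < 1) (m : ℕ) : gaussBinom q m 0 = 1 := by
  have h := gaussBinom_add_eq_div (q := q) 0 m
  rw [zero_add, Nat.cast_zero] at h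
  rw [h, qPoch_zero, one_mul, div_self (qPoch_ne_zero hq hq.le m)]

lemma gaussBinom_self (hq : ‖q‖ < 1) (m : ℕ) : gaussBinom q m m = 1 := by
  have h := gaussBinom_add_eq_div (q := q) m 0
  rw [add_zero] at h
  rw [h, qPoch_zero, mul_one, div_self (qPoch_ne_zero hq hq.le m)]

lemma gaussBinom_symm (m : ℕ) (r : ℤ) : gaussBinom q m (m - r) = gaussBinom q m r := by
  unfold gaussBinom
  by_cases h : 0 ≤ r ∧ r ≤ m
  · rw [if_pos (by omega), if_pos h, show ((m : ℤ) - r).toNat = m - r.toNat by omega,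
      show m - (m - r.toNat) = r.toNat by omega, mul_comm]
  · rw [if_neg (by omega), if_neg h]

lemma gaussBinom_succ (hq : ‖q‖ < 1) (m : ℕ) (r : ℤ) :
    gaussBinom q (m + 1) r = gaussBinom q m r + q ^ ((m : ℤ) + 1 - r) * gaussBinom q m (r - 1) := by
  rcases lt_trichotomy r 0 with hr | rfl | hr
  · rw [gaussBinom_of_neg hr, gaussBinom_of_neg hr, gaussBinom_of_neg (by omega), mul_zero,
      add_zero]
  · rw [gaussBinom_zero_right hq, gaussBinom_zero_right hq, gaussBinom_of_neg (by omega),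
      mul_zero, add_zero]
  rcases lt_trichotomy r (m + 1) with hr' | rfl | hr'
  · obtain ⟨s, rfl⟩ : ∃ s : ℕ, r = s + 1 := ⟨(r - 1).toNat, by omega⟩
    obtain ⟨j, rfl⟩ : ∃ j : ℕ, m = s + 1 + j := ⟨m - (s + 1), by omega⟩
    rw [show ((s + 1 + j : ℕ) : ℤ) + 1 - (s + 1) = ((j + 1 : ℕ) : ℤ) by push_cast; ring,
      zpow_natCast, add_sub_cancel_right, ← Nat.cast_succ,
      show s + 1 + j + 1 = s + 1 + (j + 1) by ring, gaussBinom_add_eq_div, gaussBinom_add_eq_div,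
      show s + 1 + j = s + (j + 1) by ring, gaussBinom_add_eq_div,
      show s + 1 + (j + 1) = s + (j + 1) + 1 by ring, qPoch_succ q q (s + (j + 1)),
      qPoch_succ q q s, qPoch_succ q q j]
    have := qPoch_ne_zero hq hq.le s
    have := qPoch_ne_zero hq hq.le j
    have := one_sub_mul_pow_ne_zero hq hq.le s
    have := one_sub_mul_pow_ne_zero hq hq.le j
    field_simp
    ring
  · rw [← Nat.cast_succ, gaussBinom_self hq, Nat.cast_succ, add_sub_cancel_right,
      gaussBinom_self hq, gaussBinom_of_lt (by omega), sub_self, zpow_zero, zero_add, one_mul]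
  · rw [gaussBinom_of_lt (by push_cast; omega), gaussBinom_of_lt (by omega),
      gaussBinom_of_lt (by omega), mul_zero, add_zero]

lemma gaussBinom_succ' (hq : ‖q‖ < 1) (m : ℕ) (r : ℤ) :
    gaussBinom q (m + 1) r = gaussBinom q m (r - 1) + q ^ r * gaussBinom q m r := by
  rw [← gaussBinom_symm, gaussBinom_succ hq, ← gaussBinom_symm m (((m + 1 : ℕ) : ℤ) - r),
    ← gaussBinom_symm m (((m + 1 : ℕ) : ℤ) - r - 1)]
  push_cast
  ring_nf

lemma gaussBinom_add_two (hq : ‖q‖ < 1) (hq0 : q ≠ 0) (m : ℕ) (r : ℤ) :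
    gaussBinom q (m + 2) r = (1 + q ^ (m + 1)) * gaussBinom q m (r - 1) + q ^ r * gaussBinom q m r
      + q ^ ((m : ℤ) + 2 - r) * gaussBinom q m (r - 2) := by
  rw [gaussBinom_succ hq, gaussBinom_succ' hq, gaussBinom_succ' hq, sub_sub, one_add_one_eq_two]
  have hexp : q ^ ((m : ℤ) + 2 - r) * q ^ (r - 1) = q ^ (m + 1) := by
    rw [← zpow_add₀ hq0, ← zpow_natCast]
    push_cast
    ring_nf
  push_cast
  rw [show (m : ℤ) + 1 + 1 - r = m + 2 - r by ring]
  linear_combination gaussBinom q m (r - 1) * hexp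

lemma exists_norm_gaussBinom_le (hq : ‖q‖ < 1) : ∃ C, ∀ m r, ‖gaussBinom q m r‖ ≤ C := by
  obtain ⟨C, hC⟩ := (Metric.isBounded_range_of_tendsto _ (tendsto_qPoch q hq)).exists_norm_le
  obtain ⟨D, hD⟩ := (Metric.isBounded_range_of_tendsto _
    ((tendsto_qPoch q hq).inv₀ (qPochInf_ne_zero hq hq))).exists_norm_le
  have hC' (n : ℕ) : ‖qPoch q q n‖ ≤ C := hC _ ⟨n, rfl⟩
  have hD' (n : ℕ) : ‖(qPoch q q n)⁻¹‖ ≤ D := hD _ ⟨n, rfl⟩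
  have hD0 : 0 ≤ D := (norm_nonneg _).trans (hD' 0)
  refine ⟨C * (D * D), fun m r => ?_⟩
  unfold gaussBinom
  split_ifs
  · rw [div_eq_mul_inv, mul_inv, norm_mul, norm_mul]
    exact mul_le_mul (hC' _) (mul_le_mul (hD' _) (hD' _) (norm_nonneg _) hD0)
      (by positivity) ((norm_nonneg _).trans (hC' 0))
  · rw [norm_zero]
    exact mul_nonneg ((norm_nonneg _).trans (hC' 0)) (mul_nonneg hD0 hD0)

lemma tendsto_gaussBinom_two_mul (hq : ‖q‖ < 1) (k : ℤ) :
    Tendsto (fun N : ℕ => gaussBinom q (2 * N) (N + k)) atTop (𝓝 (qPochInf q q)⁻¹) := by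
  have hB := tendsto_qPoch q hq
  have hB0 := qPochInf_ne_zero hq hq
  have h2N : Tendsto (fun N : ℕ => 2 * N) atTop atTop :=
    tendsto_atTop_atTop.mpr fun b => ⟨b, fun a ha => by omega⟩
  have hu : Tendsto (fun N : ℕ => ((N : ℤ) + k).toNat) atTop atTop :=
    tendsto_atTop_atTop.mpr fun b => ⟨b + k.natAbs, fun a ha => by omega⟩
  have hv : Tendsto (fun N : ℕ => 2 * N - ((N : ℤ) + k).toNat) atTop atTop :=
    tendsto_atTop_atTop.mpr fun b => ⟨b + k.natAbs, fun a ha => by omega⟩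
  have hlim := (hB.comp h2N).div ((hB.comp hu).mul (hB.comp hv)) (mul_ne_zero hB0 hB0)
  rw [div_mul_cancel_left₀ hB0] at hlim
  refine hlim.congr' (eventually_atTop.mpr ⟨k.natAbs, fun N hN => ?_⟩)
  simp only [gaussBinom, Nat.cast_mul, Nat.cast_ofNat]
  rw [if_pos ⟨by omega, by omega⟩]
  rfl

lemma summable_gaussBinom_mul (m : ℕ) (c : ℤ) (g : ℤ → ℂ) :
    Summable fun k => gaussBinom q m (c + k) * g k := by
  refine summable_of_ne_finset_zero (s := Finset.Icc (-c) (m - c)) fun k hk => ?_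
  rw [Finset.mem_Icc] at hk
  rcases not_and_or.mp hk with h | h
  · rw [gaussBinom_of_neg (by omega), zero_mul]
  · rw [gaussBinom_of_lt (by omega), zero_mul]

end GaussBinom

section Triangular

def triangular (k : ℤ) : ℤ := k * (k + 1) / 2

lemma triangular_add_one (k : ℤ) : triangular (k + 1) = triangular k + (k + 1) := by
  unfold triangular
  rw [show (k + 1) * (k + 1 + 1) = k * (k + 1) + (k + 1) * 2 by ring,
    Int.add_mul_ediv_right _ _ two_ne_zero]

lemma triangular_sub_one (k : ℤ) : triangular (k - 1) = triangular k - k := by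
  have h := triangular_add_one (k - 1)
  rw [sub_add_cancel] at h
  omega

lemma triangular_neg (k : ℤ) : triangular (-(k + 1)) = triangular k := by
  unfold triangular
  ring_nf

lemma triangular_natCast (n : ℕ) : triangular n = ((n * (n + 1) / 2 : ℕ) : ℤ) := by
  unfold triangular
  push_cast
  rfl

lemma le_mul_succ_div_two (n : ℕ) : n ≤ n * (n + 1) / 2 := by
  rw [Nat.le_div_iff_mul_le two_pos]
  rcases n with _ | n
  · simp
  · exact Nat.mul_le_mul_left _ (by omega)

variable {q : ℂ}

lemma summable_norm_pow_mul_succ_div_two (hq : ‖q‖ < 1) :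
    Summable fun n : ℕ => ‖q ^ (n * (n + 1) / 2)‖ :=
  (summable_geometric_of_lt_one (norm_nonneg q) hq).of_nonneg_of_le (fun _ => norm_nonneg _)
    fun n => by
      rw [norm_pow]
      exact pow_le_pow_of_le_one (norm_nonneg q) hq.le (le_mul_succ_div_two n)

lemma zpow_triangular_natCast (q : ℂ) (n : ℕ) : q ^ triangular n = q ^ (n * (n + 1) / 2) := by
  rw [triangular_natCast, zpow_natCast]

lemma zpow_triangular_neg (q : ℂ) (n : ℕ) :
    q ^ triangular (-(n + 1 : ℤ)) = q ^ (n * (n + 1) / 2) := by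
  rw [triangular_neg, zpow_triangular_natCast]

lemma summable_norm_zpow_triangular (hq : ‖q‖ < 1) :
    Summable fun k : ℤ => ‖q ^ triangular k‖ := by
  refine .of_nat_of_neg_add_one ?_ ?_ <;>
    simpa only [zpow_triangular_natCast, zpow_triangular_neg] using
      summable_norm_pow_mul_succ_div_two hq

lemma tsum_zpow_triangular (hq : ‖q‖ < 1) :
    ∑' k : ℤ, q ^ triangular k = 2 * ∑' n : ℕ, q ^ (n * (n + 1) / 2) := by
  have h := (summable_norm_pow_mul_succ_div_two hq).of_norm
  rw [tsum_of_nat_of_neg_add_one] <;>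
    simp only [zpow_triangular_natCast, zpow_triangular_neg, two_mul, h]

end Triangular

section Gauss

variable {q : ℂ}

lemma qPoch_neg_one_mul_qPoch_neg_eq_tsum (hq : ‖q‖ < 1) (hq0 : q ≠ 0) (N : ℕ) :
    qPoch (-1) q N * qPoch (-q) q N =
      ∑' k : ℤ, gaussBinom q (2 * N) (N + k) * q ^ triangular k := by
  induction N with
  | zero =>
    rw [qPoch_zero, qPoch_zero, one_mul, tsum_eq_single 0 fun k hk => ?_]
    · simp [triangular, gaussBinom_zero_right hq]
    · rcases hk.lt_or_gt with h | h
      · rw [gaussBinom_of_neg (by simpa using h), zero_mul]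
      · rw [gaussBinom_of_lt (by simpa using h), zero_mul]
  | succ N ih =>
    set A : ℤ → ℂ := fun k => gaussBinom q (2 * N) (N + k) * q ^ triangular k
    have hA : Summable A := summable_gaussBinom_mul (2 * N) N fun k => q ^ triangular k
    have hA_add (c : ℤ) : Summable fun k => A (k + c) :=
      hA.comp_injective (add_left_injective c)
    have htsum_add (c : ℤ) : ∑' k, A (k + c) = ∑' k, A k := (Equiv.addRight c).tsum_eq A
    have hterm (k : ℤ) : gaussBinom q (2 * (N + 1)) ((N + 1 : ℕ) + k) * q ^ triangular k
        = (1 + q ^ (2 * N + 1)) * A k + q ^ N * A (k + 1) + q ^ (N + 1) * A (k + -1) := by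
      have h1 : q ^ ((N : ℤ) + (k + 1)) * q ^ triangular k = q ^ N * q ^ triangular (k + 1) := by
        rw [← zpow_natCast, ← zpow_add₀ hq0, ← zpow_add₀ hq0, triangular_add_one]
        congr 1
        ring
      have h2 : q ^ (((2 * N : ℕ) : ℤ) + 2 - (N + (k + 1))) * q ^ triangular k
          = q ^ (N + 1) * q ^ triangular (k + -1) := by
        rw [← zpow_natCast, ← zpow_add₀ hq0, ← zpow_add₀ hq0, ← sub_eq_add_neg, triangular_sub_one]
        congr 1
        push_cast
        ring
      rw [show 2 * (N + 1) = 2 * N + 2 by ring, gaussBinom_add_two hq hq0,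
        show ((N + 1 : ℕ) : ℤ) + k = N + (k + 1) by push_cast; ring,
        show (N : ℤ) + (k + 1) - 1 = N + k by ring,
        show (N : ℤ) + (k + 1) - 2 = N + (k + -1) by ring]
      linear_combination gaussBinom q (2 * N) (N + (k + 1)) * h1
        + gaussBinom q (2 * N) (N + (k + -1)) * h2
    rw [qPoch_succ, qPoch_succ, mul_mul_mul_comm, ih, tsum_congr hterm,
      ((hA.mul_left _).add ((hA_add 1).mul_left _)).tsum_add ((hA_add (-1)).mul_left _),
      (hA.mul_left _).tsum_add ((hA_add 1).mul_left _),
      tsum_mul_left, tsum_mul_left, tsum_mul_left, htsum_add, htsum_add]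
    ring

lemma two_mul_qPochInf_neg_sq_eq_tsum (hq : ‖q‖ < 1) (hq0 : q ≠ 0) :
    2 * qPochInf (-q) q ^ 2 = (qPochInf q q)⁻¹ * ∑' k : ℤ, q ^ triangular k := by
  obtain ⟨C, hC⟩ := exists_norm_gaussBinom_le hq
  have hlhs := ((tendsto_qPoch (-1) hq).mul (tendsto_qPoch (-q) hq)).congr
    (qPoch_neg_one_mul_qPoch_neg_eq_tsum hq hq0)
  have hrhs : Tendsto (fun N : ℕ => ∑' k : ℤ, gaussBinom q (2 * N) (N + k) * q ^ triangular k) atTop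
      (𝓝 (∑' k : ℤ, (qPochInf q q)⁻¹ * q ^ triangular k)) :=
    tendsto_tsum_of_dominated_convergence ((summable_norm_zpow_triangular hq).mul_left C)
      (fun k => (tendsto_gaussBinom_two_mul hq k).mul_const _)
      (.of_forall fun N k => by
        rw [norm_mul]
        exact mul_le_mul_of_nonneg_right (hC _ _) (norm_nonneg _))
  rw [← tsum_mul_left, ← tendsto_nhds_unique hlhs hrhs, qPochInf_eq_one_sub_mul (-1) hq]
  ring_nf

lemma qPochInf_neg_sq_mul_qPochInf_eq_tsum (hq : ‖q‖ < 1) :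
    qPochInf (-q) q ^ 2 * qPochInf q q = ∑' n : ℕ, q ^ (n * (n + 1) / 2) := by
  rcases eq_or_ne q 0 with rfl | hq0
  · rw [tsum_eq_single 0 fun n hn => zero_pow (by have := le_mul_succ_div_two n; omega)]
    simp [qPochInf_zero_right]
  · have h := two_mul_qPochInf_neg_sq_eq_tsum hq hq0
    rw [tsum_zpow_triangular hq, inv_mul_eq_div, eq_div_iff (qPochInf_ne_zero hq hq)] at h
    linear_combination h / 2

end Gauss

theorem stmt19 (q : ℂ) (hq : ‖q‖ < 1) :
    qPochInf (-q) q ^ 2 * qPochInf q q = qPochInf (q ^ 2) (q ^ 2) / qPochInf q (q ^ 2) ∧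
      qPochInf (q ^ 2) (q ^ 2) / qPochInf q (q ^ 2) = ∑' n : ℕ, q ^ (n * (n + 1) / 2) := by
  have hprod :
      qPochInf (-q) q ^ 2 * qPochInf q q = qPochInf (q ^ 2) (q ^ 2) / qPochInf q (q ^ 2) := by
    rw [eq_div_iff (qPochInf_ne_zero hq (norm_sq_lt_one hq))]
    linear_combination (qPochInf q q * qPochInf (-q) q) * qPochInf_neg_mul_qPochInf_sq_eq_one hq
      + qPochInf_mul_qPochInf_neg q hq
  exact ⟨hprod, hprod.symm.trans (qPochInf_neg_sq_mul_qPochInf_eq_tsum hq)⟩
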